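/- Let A_1, …, A_m be symmetric n×n complex matrices with maximum pencil rank r, where A(λ) = Σ_{j=1}^m λ_j A_j, and suppose A_1, …, A_m are simultaneously diagonalizable via congruence. Then for every λ_0 ∈ ℂ^m with rank A(λ_0) = r one has ⋂_{j=1}^m ker A_j = ker A(λ_0); in particular dim(⋂_{j=1}^m ker A_j) = n − r. -/

import Mathlib

/-!
Congruence by `P` turns each `A j` into a diagonal matrix `diagonal (d j)` without changing
ranks, and changes kernels only by the isomorphism `P`. The pencil then becomes
`diagonal (∑ j, λ j • d j)`, whose rank is the size of the support of `∑ j, λ j • d j`.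
Over an infinite field a generic combination `f + t • g` has support containing
`support f ∪ support g`, so at a rank-maximising `λ₀` the support of `w = ∑ j, λ₀ j • d j`
contains that of every `d j`; hence `diagonal w *ᵥ x = 0` forces `diagonal (d j) *ᵥ x = 0`.
The dimension count is rank–nullity.
-/

open Matrix Function

theorem exists_support_union_subset_support_add_smul {n K : Type*} [Finite n] [Field K]
    [Infinite K] (f g : n → K) : ∃ t : K, support f ∪ support g ⊆ support (f + t • g) := by
  obtain ⟨t, -, ht⟩ := Set.infinite_univ.exists_notMem_finite
    (Set.finite_range fun k => -f k / g k)
  refine ⟨t, fun k hk hzero => ?_⟩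
  simp only [Pi.add_apply, Pi.smul_apply, smul_eq_mul] at hzero
  by_cases hg : g k = 0
  · simp_all
  · exact ht ⟨k, by field_simp; linear_combination -hzero⟩

theorem support_subset_of_forall_ncard_support_add_smul_le {n K : Type*} [Finite n] [Field K]
    [Infinite K] {f g : n → K} (hmax : ∀ t : K, (support (f + t • g)).ncard ≤ (support f).ncard) :
    support g ⊆ support f := by
  by_contra hsub
  obtain ⟨t, ht⟩ := exists_support_union_subset_support_add_smul f g
  exact (hmax t).not_gt <|
    Set.ncard_lt_ncard ((Set.ssubset_union_left_iff.mpr hsub).trans_subset ht)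

theorem sum_smul_diagonal {ι n K : Type*} [Fintype ι] [DecidableEq n] [Field K]
    (d : ι → n → K) (lam : ι → K) :
    ∑ j, lam j • diagonal (d j) = diagonal (∑ j, lam j • d j) := by
  simp_rw [← diagonal_smul]
  exact (map_sum (diagonalAddMonoidHom n K) _ _).symm

section Pencil

variable {ι n K : Type*} [Fintype ι] [Fintype n] [Field K]

theorem iInf_ker_le_ker_sum_smul (A : ι → Matrix n n K) (lam : ι → K) :
    ⨅ j, LinearMap.ker (A j).mulVecLin ≤ LinearMap.ker (∑ j, lam j • A j).mulVecLin := by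
  intro x hx
  simp only [Submodule.mem_iInf, LinearMap.mem_ker, mulVecLin_apply] at hx ⊢
  simp [sum_mulVec, smul_mulVec, hx]

variable [DecidableEq n]

theorem rank_diagonal_eq_ncard_support (w : n → K) :
    (diagonal w).rank = (support w).ncard := by
  classical
  rw [rank_diagonal, Fintype.card_eq_nat_card]
  rfl

theorem ker_diagonal_le_ker_diagonal {d w : n → K}
    (hsupp : support d ⊆ support w) :
    LinearMap.ker (diagonal w).mulVecLin ≤ LinearMap.ker (diagonal d).mulVecLin := by
  intro x (hx : diagonal w *ᵥ x = 0)
  show diagonal d *ᵥ x = 0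
  ext i
  have hi := congrFun hx i
  simp only [mulVec_diagonal, Pi.zero_apply, mul_eq_zero] at hi ⊢
  exact hi.imp_left fun hw => by_contra fun hd => hsupp hd hw

theorem iInf_ker_eq_ker_sum_smul_of_isDiag [Infinite K] {D : ι → Matrix n n K}
    (hD : ∀ j, (D j).IsDiag) {lam₀ : ι → K}
    (hmax : ∀ lam : ι → K, (∑ j, lam j • D j).rank ≤ (∑ j, lam₀ j • D j).rank) :
    ⨅ j, LinearMap.ker (D j).mulVecLin = LinearMap.ker (∑ j, lam₀ j • D j).mulVecLin := by
  classical
  obtain ⟨d, rfl⟩ : ∃ d : ι → n → K, D = fun j => diagonal (d j) :=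
    ⟨fun j => (D j).diag, funext fun j => ((isDiag_iff_diagonal_diag _).mp (hD j)).symm⟩
  simp only [sum_smul_diagonal, rank_diagonal_eq_ncard_support] at hmax ⊢
  refine le_antisymm (sum_smul_diagonal d lam₀ ▸ iInf_ker_le_ker_sum_smul _ lam₀)
    (le_iInf fun j => ker_diagonal_le_ker_diagonal ?_)
  refine support_subset_of_forall_ncard_support_add_smul_le fun t => ?_
  convert hmax (lam₀ + t • Pi.single j 1) using 3
  simp [add_smul, Finset.sum_add_distrib, Pi.single_apply]

theorem mul_sum_smul_mul (Q P : Matrix n n K) (A : ι → Matrix n n K) (lam : ι → K) :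
    Q * (∑ j, lam j • A j) * P = ∑ j, lam j • (Q * A j * P) := by
  simp [Matrix.mul_sum, Matrix.sum_mul]

theorem rank_mul_mul_of_isUnit {Q P : Matrix n n K} (hQ : IsUnit Q) (hP : IsUnit P)
    (M : Matrix n n K) : (Q * M * P).rank = M.rank := by
  rw [rank_mul_eq_left_of_isUnit_det _ _ ((isUnit_iff_isUnit_det P).mp hP),
    rank_mul_eq_right_of_isUnit_det _ _ ((isUnit_iff_isUnit_det Q).mp hQ)]

theorem ker_mulVecLin_mul_mul_of_isUnit {Q : Matrix n n K} (hQ : IsUnit Q)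
    (M P : Matrix n n K) :
    LinearMap.ker (Q * M * P).mulVecLin = (LinearMap.ker M.mulVecLin).comap P.mulVecLin := by
  rw [mulVecLin_mul, mulVecLin_mul, LinearMap.ker_comp, LinearMap.ker_comp,
    LinearMap.ker_eq_bot.mpr (mulVec_injective_iff_isUnit.mpr hQ)]
  rfl

theorem iInf_ker_eq_ker_sum_smul_of_congr {Q P : Matrix n n K} (hQ : IsUnit Q) (hP : IsUnit P)
    {A : ι → Matrix n n K} {lam : ι → K}
    (h : ⨅ j, LinearMap.ker (Q * A j * P).mulVecLin =
      LinearMap.ker (∑ j, lam j • (Q * A j * P)).mulVecLin) :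
    ⨅ j, LinearMap.ker (A j).mulVecLin = LinearMap.ker (∑ j, lam j • A j).mulVecLin := by
  apply Submodule.comap_injective_of_surjective (f := P.mulVecLin)
    (mulVec_surjective_iff_isUnit.mpr hP)
  rw [Submodule.comap_iInf]
  simpa only [← mul_sum_smul_mul, ker_mulVecLin_mul_mul_of_isUnit hQ] using h

end Pencil

theorem finrank_ker_mulVecLin {n : ℕ} {K : Type*} [Field K] (M : Matrix (Fin n) (Fin n) K) :
    Module.finrank K (LinearMap.ker M.mulVecLin) = n - M.rank := by
  have := LinearMap.finrank_range_add_finrank_ker M.mulVecLin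
  rw [Module.finrank_fin_fun] at this
  exact Nat.eq_sub_of_add_eq' this

theorem sdc_implies_ker_eq_ker_pencil_general (n m : ℕ)
    (A : Fin m → Matrix (Fin n) (Fin n) ℂ) (r : ℕ)
    (hr : r = ⨆ lam : Fin m → ℂ, (∑ j, lam j • A j).rank)
    (hSDC : ∃ P : Matrix (Fin n) (Fin n) ℂ, IsUnit P ∧ ∀ j, (Pᵀ * A j * P).IsDiag) :
    (∀ lam₀ : Fin m → ℂ, (∑ j, lam₀ j • A j).rank = r →
      (⨅ j, LinearMap.ker (A j).mulVecLin) = LinearMap.ker (∑ j, lam₀ j • A j).mulVecLin) ∧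
    Module.finrank ℂ ↥(⨅ j, LinearMap.ker (A j).mulVecLin) = n - r := by
  obtain ⟨P, hP, hD⟩ := hSDC
  have hPT : IsUnit Pᵀ := (isUnit_transpose P).mpr hP
  have hbdd : BddAbove (Set.range fun lam : Fin m → ℂ => (∑ j, lam j • A j).rank) :=
    ⟨n, Set.forall_mem_range.mpr fun _ => rank_le_width _⟩
  have hker : ∀ lam₀ : Fin m → ℂ, (∑ j, lam₀ j • A j).rank = r →
      (⨅ j, LinearMap.ker (A j).mulVecLin) = LinearMap.ker (∑ j, lam₀ j • A j).mulVecLin := by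
    intro lam₀ h₀
    refine iInf_ker_eq_ker_sum_smul_of_congr hPT hP (iInf_ker_eq_ker_sum_smul_of_isDiag hD ?_)
    intro lam
    simp only [← mul_sum_smul_mul, rank_mul_mul_of_isUnit hPT hP, h₀, hr]
    exact le_ciSup hbdd lam
  obtain ⟨lam₀, h₀⟩ : ∃ lam₀ : Fin m → ℂ, (∑ j, lam₀ j • A j).rank = r :=
    hr ▸ Nat.sSup_mem (Set.range_nonempty _) hbdd
  refine ⟨hker, ?_⟩
  rw [hker lam₀ h₀, finrank_ker_mulVecLin, h₀]

/-- Let A_1, …, A_m be symmetric n×n complex matrices with maximum pencil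
rank r, and suppose A_1, …, A_m are SDC. Then for every λ₀ ∈ ℂ^m with rank A(λ₀) = r one
has ⋂_j ker A_j = ker A(λ₀); in particular dim(⋂_j ker A_j) = n − r. -/
theorem sdc_implies_ker_eq_ker_pencil (n m : ℕ)
    (A : Fin m → Matrix (Fin n) (Fin n) ℂ) (hsymm : ∀ j, (A j)ᵀ = A j) (r : ℕ)
    (hr : r = ⨆ lam : Fin m → ℂ, (∑ j, lam j • A j).rank)
    (hSDC : ∃ P : Matrix (Fin n) (Fin n) ℂ, IsUnit P ∧ ∀ j, (Pᵀ * A j * P).IsDiag) :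
    (∀ lam₀ : Fin m → ℂ, (∑ j, lam₀ j • A j).rank = r →
      (⨅ j, LinearMap.ker (A j).mulVecLin) = LinearMap.ker (∑ j, lam₀ j • A j).mulVecLin) ∧
    Module.finrank ℂ ↥(⨅ j, LinearMap.ker (A j).mulVecLin) = n - r :=
  sdc_implies_ker_eq_ker_pencil_general n m A r hr hSDC
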